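/- arXiv:2205.06155 — 10 statements merged into one kernel-verified Lean document; each statement's English description precedes it below -/
import Mathlib

section
/- Let p be an odd prime and let G be a group with an infinite cyclic normal subgroup K on which the conjugation action of G is non-trivial (i.e. some element of G conjugates each k ∈ K to k⁻¹, and K ≠ 1). Then K is contained in every normal subgroup of p-power index in G; in particular every homomorphism from G to a finite p-group is trivial on K, so G and G/K have the same finite p-group quotients. -/
private lemma aux_triv {p : ℕ} (hp : p.Prime) (hodd : p ≠ 2) {G : Type*} [Group G]
    {K : Subgroup G} (hact : ∃ g : G, ∀ k ∈ K, g * k * g⁻¹ = k⁻¹)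
    (P : Type*) [Group P] (hP : IsPGroup p P) (f : G →* P) :
    ∀ k ∈ K, f k = 1 := by
  obtain ⟨g, hg⟩ := hact
  intro k hk
  set x := f k with hx
  set y := f g with hy
  have hconj : y * x * y⁻¹ = x⁻¹ := by
    rw [hx, hy, ← map_inv, ← map_mul, ← map_mul, hg k hk, map_inv]
  have key : ∀ n : ℕ, y ^ n * x * (y ^ n)⁻¹ = x ^ ((-1 : ℤ) ^ n) := by
    intro n
    induction n with
    | zero => simp
    | succ n ih =>
      have : y ^ (n + 1) * x * (y ^ (n + 1))⁻¹
          = y * (y ^ n * x * (y ^ n)⁻¹) * y⁻¹ := by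
        rw [pow_succ']; group
      rw [this, ih, ← conj_zpow, hconj, inv_zpow']
      congr 1; ring
  obtain ⟨s, hs⟩ := hP y
  have hodds : Odd (p ^ s) := (hp.odd_of_ne_two hodd).pow
  have hx2 : x = x⁻¹ := by
    have := key (p ^ s)
    rw [hs, hodds.neg_one_pow] at this
    simpa using this
  have hxx : x ^ 2 = 1 := by
    rw [pow_two]; nth_rewrite 2 [hx2]; exact mul_inv_cancel x
  obtain ⟨t, ht⟩ := hP x
  have h1 : orderOf x ∣ 2 := orderOf_dvd_of_pow_eq_one hxx
  have h2 : orderOf x ∣ p ^ t := orderOf_dvd_of_pow_eq_one ht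
  have hcop : Nat.Coprime 2 (p ^ t) :=
    (Nat.coprime_two_left.mpr (hp.odd_of_ne_two hodd)).pow_right t
  have : orderOf x = 1 := Nat.eq_one_of_dvd_coprimes hcop h1 h2
  exact orderOf_eq_one_iff.mp this

/-- Let `p` be an odd prime and `G` a group with an infinite cyclic normal
subgroup `K` on which the conjugation action of `G` is non-trivial: some element of `G`
conjugates each `k ∈ K` to `k⁻¹`, and `K ≠ 1`.  Then `K` is contained in every normal
subgroup of `p`-power index in `G`; in particular every homomorphism from `G` to a finite
`p`-group is trivial on `K`. -/
theorem stmt_2 (p : ℕ) (hp : p.Prime) (hodd : p ≠ 2) (G : Type*) [Group G]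
    (K : Subgroup G) (hK : K.Normal) (eK : K ≃* Multiplicative ℤ) (hKbot : K ≠ ⊥)
    (hact : ∃ g : G, ∀ k ∈ K, g * k * g⁻¹ = k⁻¹) :
    (∀ N : Subgroup G, N.Normal → (∃ n : ℕ, N.index = p ^ n) → K ≤ N) ∧
      ∀ (P : Type) [Group P] [Finite P], IsPGroup p P →
        ∀ f : G →* P, ∀ k ∈ K, f k = 1 := by
  constructor
  · intro N hN ⟨n, hn⟩
    have hcard : Nat.card (G ⧸ N) = p ^ n := hn
    have hfin : Finite (G ⧸ N) :=
      Nat.finite_of_card_ne_zero (by rw [hcard]; exact pow_ne_zero n hp.pos.ne')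
    have hPgrp : IsPGroup p (G ⧸ N) := IsPGroup.of_card hcard
    intro k hk
    have h1 : QuotientGroup.mk' N k = 1 :=
      aux_triv hp hodd hact (G ⧸ N) hPgrp (QuotientGroup.mk' N) k hk
    exact (QuotientGroup.eq_one_iff k).mp h1
  · intro P _ _ hP f
    exact aux_triv hp hodd hact P hP f
end

section
/- Let p be a prime, B a group, and A a normal subgroup of B isomorphic to ℤ² (written additively). Suppose some b ∈ B acts by conjugation on A/pA ≅ (ℤ/pℤ)² with no non-zero fixed vector (i.e. the induced automorphism θ_p(b) of A/pA has θ_p(b) − I invertible). Then A = [B,A] + pA, and consequently A is contained in every normal subgroup of p-power index in B. -/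
/-!
As `A` is abelian, `a ↦ ⁅b, a⁆` is an endomorphism of `A`. By hypothesis it induces an injective
endomorphism of the finite group `A / A^p`, which is therefore surjective: `A = ⁅b, A⁆ · A^p`.

If `N` is normal of index `p^(n+1)`, then `B / N` is a `p`-group, so it has a central subgroup of
order `p`; its preimage `M` is normal of index `p^n`, and `A ≤ M` by induction on `n`. As `M / N`
is central of exponent `p`, both `⁅B, A⁆` and `A^p` lie in `N`, hence so does `A`.
-/

/-- The subgroup of `m`-th powers (written additively: `m`-th multiples) of elements of `A`. -/
def powSubgroup {B : Type*} [Group B] (A : Subgroup B) (m : ℕ) : Subgroup B :=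
  Subgroup.closure {x : B | ∃ a ∈ A, x = a ^ m}

open scoped IsMulCommutative

theorem finite_quotient_range_powMonoidHom {G : Type*} [CommGroup G] [Group.FG G] {n : ℕ}
    (hn : n ≠ 0) : Finite (G ⧸ (powMonoidHom n : G →* G).range) := by
  refine CommGroup.finite_of_fg_isMulTorsion _ fun x => ?_
  induction x using QuotientGroup.induction_on with
  | H g =>
    refine isOfFinOrder_iff_pow_eq_one.mpr ⟨n, Nat.pos_of_ne_zero hn, ?_⟩
    rw [← QuotientGroup.mk_pow, QuotientGroup.eq_one_iff]
    exact ⟨g, rfl⟩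

theorem Subgroup.range_sup_eq_top_of_comap_eq {G : Type*} [Group G] (K : Subgroup G) [K.Normal]
    [Finite (G ⧸ K)] (f : G →* G) (hf : K.comap f = K) : f.range ⊔ K = ⊤ := by
  let φ : G ⧸ K →* G ⧸ K := QuotientGroup.map K K f hf.ge
  have hφ : Function.Injective φ := by
    refine (injective_iff_map_eq_one φ).mpr fun x hx => ?_
    induction x using QuotientGroup.induction_on with
    | H g =>
      rw [QuotientGroup.eq_one_iff, ← hf]
      exact (QuotientGroup.eq_one_iff (f g)).mp hx
  refine eq_top_iff.mpr fun g _ => ?_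
  obtain ⟨x, hx⟩ := Finite.surjective_of_injective hφ (g : G ⧸ K)
  induction x using QuotientGroup.induction_on with
  | H h =>
    have hK : (f h)⁻¹ * g ∈ K := QuotientGroup.eq.mp hx
    simpa using Subgroup.mul_mem_sup (f.mem_range.mpr ⟨h, rfl⟩) hK

section

variable {B : Type*} [Group B]

theorem powSubgroup_eq_map_range (A : Subgroup B) [IsMulCommutative A] (p : ℕ) :
    powSubgroup A p = ((powMonoidHom p : A →* A).range).map A.subtype := by
  rw [powSubgroup, ← Subgroup.closure_eq (Subgroup.map _ _)]
  congr 1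
  ext x
  simp only [Set.mem_ofPred_eq, Subgroup.coe_map, Set.mem_image, SetLike.mem_coe,
    MonoidHom.mem_range, powMonoidHom_apply, Subgroup.coe_subtype]
  constructor
  · rintro ⟨a, ha, rfl⟩
    exact ⟨⟨a, ha⟩ ^ p, ⟨_, rfl⟩, rfl⟩
  · rintro ⟨_, ⟨a, rfl⟩, rfl⟩
    exact ⟨a, a.2, rfl⟩

def commutatorHom (A : Subgroup B) [A.Normal] [IsMulCommutative A] (b : B) : A →* A :=
  (MulAut.conjNormal b).toMonoidHom / MonoidHom.id A

theorem coe_commutatorHom (A : Subgroup B) [A.Normal] [IsMulCommutative A] (b : B) (a : A) :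
    (commutatorHom A b a : B) = b * a * b⁻¹ * (a : B)⁻¹ := by
  simp [commutatorHom, div_eq_mul_inv]

theorem eq_commutator_sup_powSubgroup {p : ℕ} (hp : p ≠ 0) (A : Subgroup B) [A.Normal]
    [IsMulCommutative A] [Group.FG A] (b : B)
    (hb : ∀ a ∈ A, b * a * b⁻¹ * a⁻¹ ∈ powSubgroup A p → a ∈ powSubgroup A p) :
    A = ⁅(⊤ : Subgroup B), A⁆ ⊔ powSubgroup A p := by
  set K := (powMonoidHom p : A →* A).range
  have hK : K.comap (commutatorHom A b) = K := by
    have hmemK : ∀ c : A, (c : B) ∈ powSubgroup A p ↔ c ∈ K := fun c => by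
      rw [powSubgroup_eq_map_range]
      exact Subgroup.mem_map_iff_mem A.subtype_injective
    refine le_antisymm (fun a ha => ?_) ?_
    · refine (hmemK a).mp (hb a a.2 ?_)
      rw [← coe_commutatorHom]
      exact (hmemK _).mpr ha
    · rintro _ ⟨c, rfl⟩
      exact ⟨commutatorHom A b c, (map_pow _ c p).symm⟩
  have := finite_quotient_range_powMonoidHom (G := A) hp
  refine le_antisymm ?_ (sup_le (Subgroup.commutator_le_right _ _) ?_)
  · calc A = A.subtype.range := A.range_subtype.symm
      _ = (⊤ : Subgroup A).map A.subtype := A.subtype.range_eq_map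
      _ = ((commutatorHom A b).range ⊔ K).map A.subtype := by
        rw [K.range_sup_eq_top_of_comap_eq _ hK]
      _ = ((commutatorHom A b).range).map A.subtype ⊔ powSubgroup A p := by
        rw [Subgroup.map_sup, powSubgroup_eq_map_range]
      _ ≤ ⁅(⊤ : Subgroup B), A⁆ ⊔ powSubgroup A p := by
        refine sup_le_sup_right ?_ _
        rintro _ ⟨_, ⟨a, rfl⟩, rfl⟩
        rw [Subgroup.coe_subtype, coe_commutatorHom]
        exact Subgroup.commutator_mem_commutator (Subgroup.mem_top b) a.2
  · rw [powSubgroup_eq_map_range]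
    exact Subgroup.map_subtype_le _

theorem IsPGroup.exists_mem_center_orderOf_eq {p : ℕ} [Fact p.Prime] {Q : Type*} [Group Q]
    [Finite Q] [Nontrivial Q] (hQ : IsPGroup p Q) : ∃ z ∈ Subgroup.center Q, orderOf z = p := by
  have := hQ.center_nontrivial
  obtain ⟨k, hk, hcard⟩ := (hQ.to_subgroup (Subgroup.center Q)).nontrivial_iff_card.mp this
  obtain ⟨z, hz⟩ := exists_prime_orderOf_dvd_card' (G := Subgroup.center Q) p
    (hcard ▸ dvd_pow_self p hk.ne')
  exact ⟨z, z.2, (Subgroup.orderOf_coe z).trans hz⟩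

theorem Subgroup.exists_normal_central_of_index_eq_prime_pow_succ {p : ℕ} (hp : p.Prime)
    (N : Subgroup B) [N.Normal] {n : ℕ} (hN : N.index = p ^ (n + 1)) :
    ∃ M : Subgroup B, M.Normal ∧ M.index = p ^ n ∧ ⁅(⊤ : Subgroup B), M⁆ ≤ N ∧
      ∀ m ∈ M, m ^ p ∈ N := by
  have : Fact p.Prime := ⟨hp⟩
  have hcard : Nat.card (B ⧸ N) = p ^ (n + 1) := hN
  have : Finite (B ⧸ N) := Nat.finite_of_card_ne_zero (hcard ▸ pow_ne_zero _ hp.ne_zero)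
  have : Nontrivial (B ⧸ N) :=
    Finite.one_lt_card_iff_nontrivial.mp (hcard ▸ Nat.one_lt_pow n.succ_ne_zero hp.one_lt)
  obtain ⟨z, hz, hzp⟩ := (IsPGroup.of_card hcard).exists_mem_center_orderOf_eq
  have hcentral : zpowers z ≤ center (B ⧸ N) := zpowers_le.mpr hz
  have : (zpowers z).Normal := ⟨fun m hm g => by
    rw [mem_center_iff.mp (hcentral hm) g, mul_inv_cancel_right]; exact hm⟩
  refine ⟨(zpowers z).comap (QuotientGroup.mk' N), Normal.comap this _, ?_, ?_, ?_⟩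
  · rw [index_comap_of_surjective _ (QuotientGroup.mk'_surjective N)]
    have h := card_mul_index (zpowers z)
    rw [Nat.card_zpowers, hzp, hcard, pow_succ', mul_right_inj' hp.ne_zero] at h
    exact h
  · rw [commutator_le]
    intro g _ m hm
    rw [← QuotientGroup.eq_one_iff, ← QuotientGroup.mk'_apply, map_commutatorElement,
      commutatorElement_eq_one_iff_commute]
    exact mem_center_iff.mp (hcentral hm) g
  · intro m hm
    obtain ⟨k, hk⟩ := mem_zpowers_iff.mp hm
    rw [← QuotientGroup.eq_one_iff, QuotientGroup.mk_pow]
    simp only [QuotientGroup.mk'_apply] at hk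
    rw [← hk, ← zpow_natCast, ← zpow_mul, mul_comm, zpow_mul, zpow_natCast, ← hzp,
      pow_orderOf_eq_one, one_zpow]

theorem le_of_index_eq_prime_pow {p : ℕ} (hp : p.Prime) {A : Subgroup B}
    (hA : A ≤ ⁅(⊤ : Subgroup B), A⁆ ⊔ powSubgroup A p) :
    ∀ {n : ℕ} (N : Subgroup B) [N.Normal], N.index = p ^ n → A ≤ N
  | 0, N, _, hN => by
    rw [pow_zero, Subgroup.index_eq_one] at hN
    exact hN ▸ le_top
  | n + 1, N, _, hN => by
    obtain ⟨M, _, hM, hcomm, hpow⟩ := N.exists_normal_central_of_index_eq_prime_pow_succ hp hN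
    have hAM : A ≤ M := le_of_index_eq_prime_pow hp hA M hM
    refine hA.trans (sup_le ((Subgroup.commutator_mono le_rfl hAM).trans hcomm) ?_)
    exact (Subgroup.closure_le N).mpr fun _ ⟨a, ha, h⟩ => h ▸ hpow a (hAM ha)

end

/-- Let `p` be a prime, `B` a group and `A` a normal subgroup of `B`
isomorphic to `ℤ²`.  Suppose some `b ∈ B` acts by conjugation on `A/pA` with no non-zero
fixed vector (any `a ∈ A` which is fixed mod `pA` lies in `pA`).  Then `A = [B,A]·(pA)`,
and consequently `A` is contained in every normal subgroup of `p`-power index in `B`. -/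
theorem stmt_4 (p : ℕ) (hp : p.Prime) (B : Type*) [Group B] (A : Subgroup B)
    (hA : A.Normal) (e : A ≃* Multiplicative (ℤ × ℤ))
    (hb : ∃ b : B, ∀ a ∈ A, b * a * b⁻¹ * a⁻¹ ∈ powSubgroup A p → a ∈ powSubgroup A p) :
    A = ⁅(⊤ : Subgroup B), A⁆ ⊔ powSubgroup A p ∧
      ∀ N : Subgroup B, N.Normal → (∃ n : ℕ, N.index = p ^ n) → A ≤ N := by
  obtain ⟨b, hb⟩ := hb
  have : IsMulCommutative A := ⟨⟨fun x y => e.injective (by rw [map_mul, map_mul, mul_comm])⟩⟩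
  have : Group.FG A := Group.fg_of_surjective (f := e.symm.toMonoidHom) e.symm.surjective
  have hAeq := eq_commutator_sup_powSubgroup hp.ne_zero A b hb
  exact ⟨hAeq, fun N _ ⟨n, hn⟩ => le_of_index_eq_prime_pow hp hAeq.le N hn⟩
end

section
/- Let p be a prime, B a group, and A a normal subgroup of B isomorphic to ℤ² (written additively). If A = [B,A] + pA, then A = [B,A] + p^kA for every k ≥ 1; consequently Γ^kA = A for all k ≥ 1. -/
/-- `gammaSeries p A k` is the subgroup `Γ^{k+1}A` of the paper: `Γ¹A = [B,A]·(pA)` and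
`Γ^{k+1}A = [B,Γ^kA]·(p^{k+1}A)`. (Indices are shifted: `gammaSeries p A k = Γ^{k+1}A`.) -/
def gammaSeries {B : Type*} [Group B] (p : ℕ) (A : Subgroup B) : ℕ → Subgroup B
  | 0 => ⁅(⊤ : Subgroup B), A⁆ ⊔ powSubgroup A p
  | k + 1 => ⁅(⊤ : Subgroup B), gammaSeries p A k⁆ ⊔ powSubgroup A (p ^ (k + 2))

lemma powSubgroup_le {B : Type*} [Group B] (A : Subgroup B) (m : ℕ) :
    powSubgroup A m ≤ A := by
  apply Subgroup.closure_le A |>.2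
  rintro x ⟨a, ha, rfl⟩
  exact A.pow_mem ha m

lemma powSubgroup_normal {B : Type*} [Group B] (A : Subgroup B) (hA : A.Normal) (m : ℕ) :
    (powSubgroup A m).Normal := by
  constructor
  intro n hn g
  induction hn using Subgroup.closure_induction with
  | mem x hx =>
    obtain ⟨a, ha, rfl⟩ := hx
    exact Subgroup.subset_closure ⟨g * a * g⁻¹, hA.conj_mem a ha g, (conj_pow).symm⟩
  | one => simpa using (powSubgroup A m).one_mem
  | mul x y _ _ hx hy => simpa [mul_assoc] using (powSubgroup A m).mul_mem hx hy
  | inv x _ hx => simpa [mul_assoc] using (powSubgroup A m).inv_mem hx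

/-- In a group where the elements of `A` pairwise commute, every element of
`powSubgroup A m` is an `m`-th power of an element of `A`. -/
lemma mem_powSubgroup {B : Type*} [Group B] (A : Subgroup B)
    (hcomm : ∀ a ∈ A, ∀ b ∈ A, a * b = b * a) {m : ℕ} {x : B}
    (hx : x ∈ powSubgroup A m) : ∃ a ∈ A, x = a ^ m := by
  induction hx using Subgroup.closure_induction with
  | mem x hx => exact hx
  | one => exact ⟨1, A.one_mem, (one_pow m).symm⟩
  | mul x y _ _ hx hy =>
    obtain ⟨a, ha, rfl⟩ := hx
    obtain ⟨b, hb, rfl⟩ := hy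
    exact ⟨a * b, A.mul_mem ha hb, (Commute.mul_pow (hcomm a ha b hb) m).symm⟩
  | inv x _ hx =>
    obtain ⟨a, ha, rfl⟩ := hx
    exact ⟨a⁻¹, A.inv_mem ha, (inv_pow a m).symm⟩

/-- Let `p` be a prime, `B` a group and `A` a normal subgroup of `B`
isomorphic to `ℤ²`.  If `A = [B,A]·(pA)`, then `A = [B,A]·(p^kA)` for every `k ≥ 1`,
and consequently `Γ^kA = A` for every `k ≥ 1`. -/
theorem stmt_5 (p : ℕ) (hp : p.Prime) (B : Type*) [Group B] (A : Subgroup B)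
    (hA : A.Normal) (e : A ≃* Multiplicative (ℤ × ℤ))
    (h : A = ⁅(⊤ : Subgroup B), A⁆ ⊔ powSubgroup A p) :
    (∀ k : ℕ, 1 ≤ k → A = ⁅(⊤ : Subgroup B), A⁆ ⊔ powSubgroup A (p ^ k)) ∧
      ∀ k : ℕ, gammaSeries p A k = A := by
  -- `A` is abelian, since it is isomorphic to `ℤ × ℤ`.
  have hcomm : ∀ a ∈ A, ∀ b ∈ A, a * b = b * a := by
    intro a ha b hb
    have : (⟨a, ha⟩ : A) * ⟨b, hb⟩ = ⟨b, hb⟩ * ⟨a, ha⟩ := by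
      apply e.injective
      rw [map_mul, map_mul, mul_comm]
    exact congrArg Subtype.val this
  have hK : (⁅(⊤ : Subgroup B), A⁆ : Subgroup B) ≤ A := Subgroup.commutator_le_right _ _
  haveI : (⁅(⊤ : Subgroup B), A⁆ : Subgroup B).Normal := Subgroup.commutator_normal _ _
  -- key step: `p^k A ≤ [B,A] ⊔ p^{k+1} A`.
  have key : ∀ k : ℕ, powSubgroup A (p ^ k) ≤
      ⁅(⊤ : Subgroup B), A⁆ ⊔ powSubgroup A (p ^ (k + 1)) := by
    intro k
    apply Subgroup.closure_le _ |>.2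
    rintro x ⟨a, ha, rfl⟩
    -- decompose `a = c * d` with `c ∈ [B,A]`, `d ∈ pA`
    have ha' : a ∈ (⁅(⊤ : Subgroup B), A⁆ ⊔ powSubgroup A p : Subgroup B) := h ▸ ha
    haveI : (powSubgroup A p).Normal := powSubgroup_normal A hA p
    rw [← SetLike.mem_coe, Subgroup.mul_normal] at ha'
    obtain ⟨c, hc, d, hd, rfl⟩ := ha'
    obtain ⟨b, hb, rfl⟩ := mem_powSubgroup A hcomm hd
    have hcb : Commute c (b ^ p) :=
      hcomm c (hK hc) (b ^ p) (A.pow_mem hb p)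
    have : (c * b ^ p) ^ p ^ k = c ^ p ^ k * b ^ p ^ (k + 1) := by
      rw [Commute.mul_pow hcb, ← pow_mul, pow_succ', mul_comm p (p ^ k)]
    rw [this]
    exact Subgroup.mul_mem _
      (Subgroup.mem_sup_left (Subgroup.pow_mem _ hc _))
      (Subgroup.mem_sup_right (Subgroup.subset_closure ⟨b, hb, rfl⟩))
  have main : ∀ k : ℕ, 1 ≤ k → A = ⁅(⊤ : Subgroup B), A⁆ ⊔ powSubgroup A (p ^ k) := by
    intro k hk
    induction k with
    | zero => omega
    | succ k ih =>
      rcases Nat.eq_or_lt_of_le hk with h1 | h1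
      · obtain rfl : k = 0 := by omega
        simpa [pow_one] using h
      · have ih' := ih (by omega)
        apply le_antisymm
        · calc A = ⁅(⊤ : Subgroup B), A⁆ ⊔ powSubgroup A (p ^ k) := ih'
            _ ≤ ⁅(⊤ : Subgroup B), A⁆ ⊔ (⁅(⊤ : Subgroup B), A⁆ ⊔ powSubgroup A (p ^ (k + 1))) :=
              sup_le_sup_left (key k) _
            _ = ⁅(⊤ : Subgroup B), A⁆ ⊔ powSubgroup A (p ^ (k + 1)) := by rw [← sup_assoc, sup_idem]
        · exact sup_le hK (powSubgroup_le A _)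
  refine ⟨main, ?_⟩
  intro k
  induction k with
  | zero => simp [gammaSeries, ← h]
  | succ k ih =>
    show ⁅(⊤ : Subgroup B), gammaSeries p A k⁆ ⊔ powSubgroup A (p ^ (k + 2)) = A
    rw [ih]
    exact (main (k + 2) (by omega)).symm
end

section
/- Let p be a prime, B a group, and A a normal subgroup of B isomorphic to ℤ², written additively with basis {e₁, e₂}. Suppose that [B,e₁] ⊆ pA and [B,e₂] ⊆ ℤe₁ + pA (i.e. the conjugation action of B on A/pA is by upper unitriangular matrices with respect to this basis). Then Γ^{2k}A ⊆ p^kA for every k ≥ 1, and hence ⋂_{k≥1} Γ^kA = 0. -/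
/-!
Coordinates `A ≃ ℤ²` turn each commutator map `a ↦ [b, a]` into an additive endomorphism of `ℤ²`
whose matrix is `≡ 0 mod p` in its first column and in its second row. Such a map sends the lattice
`sℤ × tℤ` into `gcd(ps, t)ℤ × p·gcd(s, t)ℤ`, so alternately the first and the second coordinate
gain a factor `p`: `Γ^{n+1}A ⊆ p^⌈n/2⌉ℤ × p^(⌊n/2⌋+1)ℤ`. For `n = 2k - 1` this is `p^kA`, and an
integer divisible by every power of `p > 1` vanishes.
-/

open scoped commutatorElement

namespace Subgroup

variable {B : Type*} [Group B] {A : Subgroup B}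

variable (e : A ≃* Multiplicative (ℤ × ℤ))

def coord (a : A) : ℤ × ℤ := (e a).toAdd

@[simp] lemma coord_one : coord e 1 = 0 := by simp [coord]

@[simp] lemma coord_mul (a a' : A) : coord e (a * a') = coord e a + coord e a' := by simp [coord]

@[simp] lemma coord_inv (a : A) : coord e a⁻¹ = -coord e a := by simp [coord]

@[simp] lemma coord_pow (a : A) (n : ℕ) : coord e (a ^ n) = n • coord e a := by simp [coord]

@[simp] lemma coord_zpow (a : A) (n : ℤ) : coord e (a ^ n) = n • coord e a := by simp [coord]

@[simp] lemma coord_symm (v : ℤ × ℤ) : coord e (e.symm (.ofAdd v)) = v := by simp [coord]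

lemma coord_injective : Function.Injective (coord e) :=
  Multiplicative.toAdd.injective.comp e.injective

/-- The elements of `A` with coordinates in `sℤ × tℤ`. -/
def grid (s t : ℕ) : Subgroup B where
  carrier := {x | ∃ a : A, ((s : ℤ) ∣ (coord e a).1 ∧ (t : ℤ) ∣ (coord e a).2) ∧ ↑a = x}
  one_mem' := ⟨1, by simp, rfl⟩
  mul_mem' := by
    rintro _ _ ⟨a, ⟨ha₁, ha₂⟩, rfl⟩ ⟨a', ⟨ha₁', ha₂'⟩, rfl⟩
    exact ⟨a * a', by simpa using ⟨dvd_add ha₁ ha₁', dvd_add ha₂ ha₂'⟩, rfl⟩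
  inv_mem' := by
    rintro _ ⟨a, ⟨ha₁, ha₂⟩, rfl⟩
    exact ⟨a⁻¹, by simpa using ⟨ha₁, ha₂⟩, rfl⟩

lemma coe_mem_grid {s t : ℕ} {a : A} :
    (a : B) ∈ grid e s t ↔ (s : ℤ) ∣ (coord e a).1 ∧ (t : ℤ) ∣ (coord e a).2 :=
  ⟨fun ⟨_, h, ha⟩ ↦ Subtype.coe_injective ha ▸ h, fun h ↦ ⟨a, h, rfl⟩⟩

lemma grid_one_one : grid e 1 1 = A :=
  le_antisymm (fun _ ⟨a, _, ha⟩ ↦ ha ▸ a.2) fun x hx ↦ (coe_mem_grid e (a := ⟨x, hx⟩)).2 (by simp)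

lemma grid_mono {s t s' t' : ℕ} (hs : s' ∣ s) (ht : t' ∣ t) : grid e s t ≤ grid e s' t' :=
  fun _ ⟨a, ⟨ha₁, ha₂⟩, hax⟩ ↦
    ⟨a, ⟨(Int.natCast_dvd_natCast.2 hs).trans ha₁, (Int.natCast_dvd_natCast.2 ht).trans ha₂⟩, hax⟩

lemma grid_self (m : ℕ) : grid e m m = powSubgroup A m := by
  refine le_antisymm ?_ ((closure_le _).2 ?_)
  · rintro _ ⟨a, ⟨⟨u, hu⟩, ⟨v, hv⟩⟩, rfl⟩
    have : a = e.symm (.ofAdd (u, v)) ^ m := coord_injective e (by ext <;> simp [hu, hv])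
    exact subset_closure ⟨_, SetLike.coe_mem _, congrArg Subtype.val this⟩
  · rintro _ ⟨a, ha, rfl⟩
    exact ⟨⟨a, ha⟩ ^ m, by simp only [coord_pow]; simp, rfl⟩

include e in
lemma eq_one_of_forall_mem_powSubgroup {p : ℕ} (hp : 1 < p) {x : B}
    (hx : ∀ k, 1 ≤ k → x ∈ powSubgroup A (p ^ k)) : x = 1 := by
  have hzero (n : ℤ) (hn : ∀ k, (p : ℤ) ^ (k + 1) ∣ n) : n = 0 := by
    by_contra hn₀
    obtain ⟨k, hk⟩ := (Int.finiteMultiplicity_iff (a := p)).2 ⟨by omega, hn₀⟩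
    exact hk (hn k)
  have hgrid (k : ℕ) : x ∈ grid e (p ^ (k + 1)) (p ^ (k + 1)) := by
    rw [grid_self]; exact hx (k + 1) k.succ_pos
  obtain ⟨a, -, rfl⟩ := hgrid 0
  have hcoord : coord e a = coord e 1 := by
    have := fun k ↦ (coe_mem_grid e).1 (hgrid k)
    rw [coord_one]
    ext
    · exact hzero _ fun k ↦ by exact_mod_cast (this k).1
    · exact hzero _ fun k ↦ by exact_mod_cast (this k).2
  simp [coord_injective e hcoord]

variable (hA : A.Normal)

def commutatorIn (b : B) (a : A) : A :=
  ⟨⁅b, (a : B)⁆, A.mul_mem (hA.conj_mem a a.2 b) (A.inv_mem a.2)⟩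

lemma commutatorIn_eq (b : B) (a : A) :
    commutatorIn hA b a = (haveI := hA; MulAut.conjNormal b a) * a⁻¹ :=
  rfl

variable {e₁ e₂ : A} (he₁ : coord e e₁ = (1, 0)) (he₂ : coord e e₂ = (0, 1))
include he₁ he₂

lemma eq_zpow_mul_zpow (a : A) : a = e₁ ^ (coord e a).1 * e₂ ^ (coord e a).2 :=
  coord_injective e (by ext <;> simp [he₁, he₂])

lemma coord_commutatorIn (b : B) (a : A) :
    coord e (commutatorIn hA b a) = (coord e a).1 • coord e (commutatorIn hA b e₁) +
      (coord e a).2 • coord e (commutatorIn hA b e₂) := by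
  conv_lhs => rw [eq_zpow_mul_zpow e he₁ he₂ a]
  simp only [commutatorIn_eq, map_mul, map_zpow, mul_inv_rev, coord_mul, coord_zpow, coord_inv]
  module

variable {p : ℕ} (h₁ : ∀ b : B, ⁅b, (e₁ : B)⁆ ∈ grid e p p)
  (h₂ : ∀ b : B, ⁅b, (e₂ : B)⁆ ∈ grid e 1 p)
include hA h₁ h₂

lemma commutator_grid_le {s t u v : ℕ} (hu₁ : u ∣ p * s) (hu₂ : u ∣ t) (hv₁ : v ∣ p * s)
    (hv₂ : v ∣ p * t) : ⁅(⊤ : Subgroup B), grid e s t⁆ ≤ grid e u v := by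
  rw [commutator_le]
  rintro b - _ ⟨a, ⟨hs, ht⟩, rfl⟩
  obtain ⟨hc₁₁, hc₁₂⟩ := (coe_mem_grid e (a := commutatorIn hA b e₁)).1 (h₁ b)
  obtain ⟨-, hc₂₂⟩ := (coe_mem_grid e (a := commutatorIn hA b e₂)).1 (h₂ b)
  have hcast {w x y : ℕ} (h : w ∣ x * y) : (w : ℤ) ∣ x * y := by exact_mod_cast h
  refine (coe_mem_grid e (a := commutatorIn hA b a)).2 ?_
  rw [coord_commutatorIn e hA he₁ he₂ b a]
  simp only [Prod.fst_add, Prod.snd_add, Prod.smul_fst, Prod.smul_snd, smul_eq_mul]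
  constructor
  · exact dvd_add ((hcast hu₁).trans (mul_comm (p : ℤ) s ▸ mul_dvd_mul hs hc₁₁))
      ((Int.natCast_dvd_natCast.2 hu₂).trans (ht.mul_right _))
  · exact dvd_add ((hcast hv₁).trans (mul_comm (p : ℤ) s ▸ mul_dvd_mul hs hc₁₂))
      ((hcast hv₂).trans (mul_comm (p : ℤ) t ▸ mul_dvd_mul ht hc₂₂))

lemma commutator_sup_powSubgroup_le {H : Subgroup B} {i j i' j' m : ℕ}
    (hH : H ≤ grid e (p ^ i) (p ^ j)) (hi : i' ≤ i + 1) (hij : i' ≤ j) (hji : j' ≤ i + 1)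
    (hj : j' ≤ j + 1) (hmi : i' ≤ m) (hmj : j' ≤ m) :
    ⁅(⊤ : Subgroup B), H⁆ ⊔ powSubgroup A (p ^ m) ≤ grid e (p ^ i') (p ^ j') := by
  have hdvd {k l : ℕ} (h : k ≤ l) : p ^ k ∣ p ^ l := pow_dvd_pow p h
  refine sup_le ((commutator_mono le_rfl hH).trans
    (commutator_grid_le e hA he₁ he₂ h₁ h₂ ?_ (hdvd hij) ?_ ?_)) ?_
  · exact pow_succ' p i ▸ hdvd hi
  · exact pow_succ' p i ▸ hdvd hji
  · exact pow_succ' p j ▸ hdvd hj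
  · exact grid_self e (p ^ m) ▸ grid_mono e (hdvd hmi) (hdvd hmj)

lemma gammaSeries_le_grid (n : ℕ) :
    gammaSeries p A n ≤ grid e (p ^ ((n + 1) / 2)) (p ^ (n / 2 + 1)) := by
  induction n with
  | zero =>
    simpa [gammaSeries] using commutator_sup_powSubgroup_le e hA he₁ he₂ h₁ h₂
      (H := A) (i := 0) (j := 0) (i' := 0) (j' := 1) (m := 1) (by simp [grid_one_one e])
      (by omega) (by omega) (by omega) (by omega) (by omega) (by omega)
  | succ n ih =>
    rw [gammaSeries]
    exact commutator_sup_powSubgroup_le e hA he₁ he₂ h₁ h₂ ih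
      (by omega) (by omega) (by omega) (by omega) (by omega) (by omega)

end Subgroup

open Subgroup in
/-- Let `p` be a prime, `B` a group, and `A` a normal subgroup of `B`
isomorphic to `ℤ²` with basis `{e₁, e₂}`.  Suppose `[B,e₁] ⊆ pA` and
`[B,e₂] ⊆ ℤe₁ + pA` (the conjugation action of `B` on `A/pA` is upper unitriangular
with respect to this basis).  Then `Γ^{2k}A ⊆ p^kA` for every `k ≥ 1`, and hence
`⋂_{k ≥ 1} Γ^kA = 1`. -/
theorem stmt_6 (p : ℕ) (hp : p.Prime) (B : Type*) [Group B] (A : Subgroup B)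
    (hA : A.Normal) (e : A ≃* Multiplicative (ℤ × ℤ)) (e₁ e₂ : A)
    (he₁ : e e₁ = Multiplicative.ofAdd ((1, 0) : ℤ × ℤ))
    (he₂ : e e₂ = Multiplicative.ofAdd ((0, 1) : ℤ × ℤ))
    (h1 : ∀ b : B, b * ↑e₁ * b⁻¹ * (↑e₁ : B)⁻¹ ∈ powSubgroup A p)
    (h2 : ∀ b : B, b * ↑e₂ * b⁻¹ * (↑e₂ : B)⁻¹ ∈
      Subgroup.closure {(↑e₁ : B)} ⊔ powSubgroup A p) :
    (∀ k : ℕ, 1 ≤ k → gammaSeries p A (2 * k - 1) ≤ powSubgroup A (p ^ k)) ∧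
      (⨅ k : ℕ, gammaSeries p A k) = ⊥ := by
  have he₁' : coord e e₁ = (1, 0) := congrArg Multiplicative.toAdd he₁
  have he₂' : coord e e₂ = (0, 1) := congrArg Multiplicative.toAdd he₂
  have h₁ (b : B) : ⁅b, (e₁ : B)⁆ ∈ grid e p p := by rw [grid_self]; exact h1 b
  have hle : closure {(e₁ : B)} ⊔ powSubgroup A p ≤ grid e 1 p :=
    sup_le ((closure_le _).2 (Set.singleton_subset_iff.2 ((coe_mem_grid e).2 (by simp [he₁']))))
      (grid_self e p ▸ grid_mono e (one_dvd p) dvd_rfl)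
  have hΓ := gammaSeries_le_grid e hA he₁' he₂' h₁ fun b ↦ hle (h2 b)
  have hpow (k : ℕ) (hk : 1 ≤ k) : gammaSeries p A (2 * k - 1) ≤ powSubgroup A (p ^ k) := by
    have := hΓ (2 * k - 1)
    rwa [show (2 * k - 1 + 1) / 2 = k by omega, show (2 * k - 1) / 2 + 1 = k by omega,
      grid_self] at this
  refine ⟨hpow, eq_bot_iff.2 fun x hx ↦ eq_one_of_forall_mem_powSubgroup e hp.one_lt ?_⟩
  exact fun k hk ↦ hpow k hk (iInf_le (gammaSeries p A) _ hx)
end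

section
/- Let p be a prime, B a group, and A a normal subgroup of B isomorphic to ℤ². Then for every homomorphism f from B to a finite p-group there exists N ≥ 1 such that f(Γ^N A) = 1. In particular ⋂_{k≥1} Γ^kA is contained in every normal subgroup of p-power index in B. -/
/-!
Let `f : B →* P` with `P` a finite `p`-group, and let `p ^ n` kill `P`. The power part of
`gammaSeries p A (n + j)` then dies in `P`, so the image of this term is pushed down the lower
central series of `P` by the commutator part alone, and it vanishes for large `j` since `P` is
nilpotent. For a normal subgroup of `p`-power index, apply this to the quotient map.
-/

open Subgroup

theorem map_powSubgroup_eq_bot {B P : Type*} [Group B] [Group P] (A : Subgroup B) {m : ℕ}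
    (f : B →* P) (hm : ∀ x : P, x ^ m = 1) : (powSubgroup A m).map f = ⊥ := by
  rw [eq_bot_iff, map_le_iff_le_comap, powSubgroup, closure_le]
  rintro _ ⟨a, -, rfl⟩
  simp [hm (f a)]

theorem map_gammaSeries_add_le_lowerCentralSeries {B P : Type*} [Group B] [Group P] (p : ℕ)
    (A : Subgroup B) (f : B →* P) {n : ℕ} (hn : ∀ x : P, x ^ p ^ n = 1) (j : ℕ) :
    (gammaSeries p A (n + j)).map f ≤ (⊤ : Subgroup P).lowerCentralSeries j := by
  induction j with
  | zero => exact le_top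
  | succ j ih =>
    have hpow : ∀ x : P, x ^ p ^ (n + j + 2) = 1 := fun x => by
      obtain ⟨c, hc⟩ := pow_dvd_pow p (show n ≤ n + j + 2 by omega)
      rw [hc, pow_mul, hn, one_pow]
    rw [← add_assoc, gammaSeries, Subgroup.map_sup, map_commutator,
      map_powSubgroup_eq_bot A f hpow, sup_bot_eq, Subgroup.lowerCentralSeries_succ, commutator_comm]
    exact commutator_mono ih le_top

theorem exists_gammaSeries_le_ker_of_isNilpotent {B P : Type*} [Group B] [Group P]
    [Group.IsNilpotent P] (p : ℕ) (A : Subgroup B) (f : B →* P) {n : ℕ}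
    (hn : ∀ x : P, x ^ p ^ n = 1) : ∃ N, gammaSeries p A N ≤ f.ker := by
  obtain ⟨c, hc⟩ := Subgroup.nilpotent_iff_lowerCentralSeries.mp ‹Group.IsNilpotent P›
  refine ⟨n + c, ?_⟩
  rw [← Subgroup.map_eq_bot_iff, eq_bot_iff, ← hc]
  exact map_gammaSeries_add_le_lowerCentralSeries p A f hn c

theorem IsPGroup.exists_gammaSeries_le_ker {p : ℕ} (hp : p.Prime) {B P : Type*} [Group B]
    [Group P] [Finite P] (hP : IsPGroup p P) (A : Subgroup B) (f : B →* P) :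
    ∃ N, gammaSeries p A N ≤ f.ker := by
  have : Fact p.Prime := ⟨hp⟩
  have : Group.IsNilpotent P := hP.isNilpotent
  obtain ⟨n, hn⟩ := IsPGroup.iff_card.mp hP
  exact exists_gammaSeries_le_ker_of_isNilpotent p A f fun x => hn ▸ pow_card_eq_one'

theorem iInf_gammaSeries_le_of_index_eq_pow {p : ℕ} (hp : p.Prime) {B : Type*} [Group B]
    (A N : Subgroup B) [N.Normal] {n : ℕ} (hN : N.index = p ^ n) :
    ⨅ k, gammaSeries p A k ≤ N := by
  have hcard : Nat.card (B ⧸ N) = p ^ n := hN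
  have : Finite (B ⧸ N) := Nat.finite_of_card_ne_zero (hcard ▸ pow_ne_zero n hp.ne_zero)
  obtain ⟨M, hM⟩ := (IsPGroup.of_card hcard).exists_gammaSeries_le_ker hp A (QuotientGroup.mk' N)
  rw [QuotientGroup.ker_mk'] at hM
  exact (iInf_le _ M).trans hM

theorem stmt_7_general (p : ℕ) (hp : p.Prime) (B : Type*) [Group B] (A : Subgroup B) :
    (∀ (P : Type) [Group P] [Finite P], IsPGroup p P → ∀ f : B →* P,
      ∃ N : ℕ, ∀ a ∈ gammaSeries p A N, f a = 1) ∧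
      ∀ N : Subgroup B, N.Normal → (∃ n : ℕ, N.index = p ^ n) →
        (⨅ k : ℕ, gammaSeries p A k) ≤ N :=
  ⟨fun _ _ _ hP f => hP.exists_gammaSeries_le_ker hp A f,
    fun N _ ⟨_, hN⟩ => iInf_gammaSeries_le_of_index_eq_pow hp A N hN⟩

/-- Let `p` be a prime, `B` a group, and `A` a normal subgroup of `B`
isomorphic to `ℤ²`.  Then for every homomorphism `f` from `B` to a finite `p`-group
there is an `N ≥ 1` with `f(Γ^N A) = 1`; in particular `⋂_{k ≥ 1} Γ^kA` is contained in
every normal subgroup of `p`-power index in `B`. -/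
theorem stmt_7 (p : ℕ) (hp : p.Prime) (B : Type*) [Group B] (A : Subgroup B)
    (hA : A.Normal) (e : A ≃* Multiplicative (ℤ × ℤ)) :
    (∀ (P : Type) [Group P] [Finite P], IsPGroup p P → ∀ f : B →* P,
      ∃ N : ℕ, ∀ a ∈ gammaSeries p A N, f a = 1) ∧
      ∀ N : Subgroup B, N.Normal → (∃ n : ℕ, N.index = p ^ n) →
        (⨅ k : ℕ, gammaSeries p A k) ≤ N :=
  stmt_7_general p hp B A
end

section
/- Let p be a prime, B a group, and A a normal subgroup of B isomorphic to ℤ². Then for every k ≥ 1, the image of the homomorphism B → Aut(A/Γ^kA) induced by the conjugation action of B on A is a finite p-group. -/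
/-!
Since `A ≅ ℤ²` is abelian and finitely generated and `p^{k+1}A ≤ Γ^{k+1}A`, the quotient
`Q = A/Γ^{k+1}A` is a finite abelian group of exponent dividing `p^{k+1}`, so `Aut Q` is finite.
An element `b ∈ B` acts on `Q` as `σ = x + 1` in the endomorphism ring of `Q`, where `x = σ - 1`
maps the image of `Γ^iA` into that of `Γ^{i+1}A` (as `b a b⁻¹ a⁻¹ ∈ [B, Γ^iA]`), so
`x^{k+1} = 0`. In the binomial expansion of `(x + 1)^{p^N}` the terms `x^m` with `0 < m ≤ k`
are killed by `p^{k+1} ∣ binom(p^N, m)` for `N` large, and the others vanish; hence `σ` has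
`p`-power order.
-/

theorem Nat.Prime.pow_dvd_choose_prime_pow {p n m : ℕ} (hp : p.Prime) (hm0 : m ≠ 0)
    (hmn : m ≤ p ^ n) : p ^ (n + 1 - m) ∣ (p ^ n).choose m := by
  apply pow_dvd_of_le_emultiplicity
  rw [hp.emultiplicity_choose_prime_pow hmn hm0, Nat.cast_le]
  have : multiplicity p m < m :=
    (Nat.lt_pow_self hp.one_lt).trans_le
      (Nat.le_of_dvd (Nat.pos_of_ne_zero hm0) (pow_multiplicity_dvd p m))
  omega

theorem add_one_pow_prime_pow_eq_one {R : Type*} [Ring R] {p a b : ℕ} (hp : p.Prime) {x : R}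
    (hx : x ^ a = 0) (hpR : (p : R) ^ b = 0) : (x + 1) ^ p ^ (a + b) = 1 := by
  rw [(Commute.one_right x).add_pow, Finset.sum_eq_single 0 (fun m hm hm0 => ?_) (by simp)]
  · simp
  rw [one_pow, mul_one]
  rcases lt_or_ge m a with hma | ham
  · obtain ⟨t, ht⟩ := (pow_dvd_pow p (by omega : b ≤ a + b + 1 - m)).trans
      (hp.pow_dvd_choose_prime_pow hm0 (Finset.mem_range_succ_iff.mp hm))
    rw [ht, Nat.cast_mul, Nat.cast_pow, hpR, zero_mul, mul_zero]
  · rw [pow_eq_zero_of_le ham hx, zero_mul]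

theorem MulAut.pow_prime_pow_eq_one_of_stabilizes {G : Type*} [CommGroup G] {p a b : ℕ}
    (hp : p.Prime) (hexp : ∀ x : G, x ^ p ^ b = 1) (H : ℕ → Subgroup G) (h0 : H 0 = ⊤)
    (ha : H a = ⊥) (σ : MulAut G) (hσ : ∀ i, ∀ x ∈ H i, σ x / x ∈ H (i + 1)) :
    σ ^ p ^ (a + b) = 1 := by
  let φ : MulAut G →* AddMonoid.End (Additive G) :=
    (monoidEndToAdditive G : Monoid.End G →* AddMonoid.End (Additive G)).comp
      (MulDistribMulAction.toMonoidEnd (MulAut G) G)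
  have hφ : Function.Injective φ := fun σ τ h =>
    MulEquiv.ext fun x => congrArg Additive.toMul (DFunLike.congr_fun h (Additive.ofMul x))
  set x := φ σ - 1
  have hx_mem : ∀ i y, ((x ^ i) y).toMul ∈ H i := by
    intro i
    induction i with
    | zero => simp [h0]
    | succ i ih => intro y; rw [pow_succ']; exact hσ i _ (ih y)
  have hx_nil : x ^ a = 0 := by
    ext y
    have hy := hx_mem a y
    rw [ha, Subgroup.mem_bot] at hy
    exact congrArg Additive.ofMul hy
  have hp_zero : (p : AddMonoid.End (Additive G)) ^ b = 0 := by
    ext y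
    rw [← Nat.cast_pow, AddMonoid.End.natCast_apply]
    exact congrArg Additive.ofMul (hexp y.toMul)
  apply hφ
  rw [map_pow, map_one, ← sub_add_cancel (φ σ) 1]
  exact add_one_pow_prime_pow_eq_one hp hx_nil hp_zero

instance QuotientGroup.isMulCommutative {G : Type*} [Group G] [IsMulCommutative G]
    (N : Subgroup G) [N.Normal] : IsMulCommutative (G ⧸ N) :=
  ⟨⟨fun x y => by
    induction x using QuotientGroup.induction_on
    induction y using QuotientGroup.induction_on
    rw [← QuotientGroup.mk_mul, mul_comm', QuotientGroup.mk_mul]⟩⟩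

section GammaSeries

variable {B : Type*} [Group B] (p : ℕ) (A : Subgroup B)

/-- `Γ^i A` in the paper's indexing, so that `Γ⁰A = A`. -/
def gammaChain : ℕ → Subgroup B
  | 0 => A
  | i + 1 => gammaSeries p A i

lemma commutator_gammaChain_le :
    ∀ i, ⁅(⊤ : Subgroup B), gammaChain p A i⁆ ≤ gammaChain p A (i + 1)
  | 0 => le_sup_left
  | _ + 1 => le_sup_left

lemma pow_mem_gammaSeries {a : B} (ha : a ∈ A) (k : ℕ) :
    a ^ p ^ (k + 1) ∈ gammaSeries p A k := by
  have hpow : a ^ p ^ (k + 1) ∈ powSubgroup A (p ^ (k + 1)) :=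
    Subgroup.subset_closure ⟨a, ha, rfl⟩
  cases k with
  | zero => exact (le_sup_right : powSubgroup A p ≤ _) (by simpa using hpow)
  | succ k => exact le_sup_right (a := ⁅(⊤ : Subgroup B), gammaSeries p A k⁆) hpow

variable {p A} (k : ℕ) [((gammaSeries p A k).subgroupOf A).Normal]

lemma pow_eq_one_of_quotient_gammaSeries (x : A ⧸ (gammaSeries p A k).subgroupOf A) :
    x ^ p ^ (k + 1) = 1 := by
  induction x using QuotientGroup.induction_on with | H a =>
  rw [← QuotientGroup.mk_pow, QuotientGroup.eq_one_iff, Subgroup.mem_subgroupOf,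
    Subgroup.coe_pow]
  exact pow_mem_gammaSeries p A a.2 k

lemma conj_div_mem_map_gammaChain (hA : A.Normal)
    (θ : B →* MulAut (A ⧸ (gammaSeries p A k).subgroupOf A))
    (hθ : ∀ (b : B) (a : A), θ b (QuotientGroup.mk a) =
      QuotientGroup.mk (⟨b * ↑a * b⁻¹, hA.conj_mem ↑a a.2 b⟩ : A)) (b : B) (i : ℕ) :
    ∀ x ∈ ((gammaChain p A i).subgroupOf A).map (QuotientGroup.mk' _),
      θ b x / x ∈ ((gammaChain p A (i + 1)).subgroupOf A).map (QuotientGroup.mk' _) := by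
  rintro _ ⟨a, ha, rfl⟩
  refine ⟨⟨b * ↑a * b⁻¹, hA.conj_mem ↑a a.2 b⟩ * a⁻¹, ?_, ?_⟩
  · exact commutator_gammaChain_le p A i
      (Subgroup.commutator_mem_commutator (Subgroup.mem_top b) ha)
  · simp [hθ, div_eq_mul_inv]

end GammaSeries

/-- Let `p` be a prime, `B` a group, and `A` a normal subgroup of `B`
isomorphic to `ℤ²`.  Then for every `k ≥ 1` the image of the homomorphism
`B →* Aut(A/Γ^kA)` induced by the conjugation action of `B` on `A` is a finite `p`-group.
(Here `θ` ranges over the homomorphisms `B →* Aut(A/Γ^kA)` induced by conjugation;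
`Γ^kA` is viewed as a subgroup of `A`, which is legitimate since `Γ^kA ≤ A`;
the hypothesis that it is normal in `A` is automatic since `A` is abelian.) -/
theorem stmt_8 (p : ℕ) (hp : p.Prime) (B : Type*) [Group B] (A : Subgroup B)
    (hA : A.Normal) (e : A ≃* Multiplicative (ℤ × ℤ)) (k : ℕ)
    (hnorm : ((gammaSeries p A k).subgroupOf A).Normal)
    (θ : B →* MulAut (A ⧸ (gammaSeries p A k).subgroupOf A))
    (hθ : ∀ (b : B) (a : A), θ b (QuotientGroup.mk a) =
      QuotientGroup.mk (⟨b * ↑a * b⁻¹, hA.conj_mem ↑a a.2 b⟩ : A)) :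
    Finite θ.range ∧ IsPGroup p θ.range := by
  set Q := A ⧸ (gammaSeries p A k).subgroupOf A
  have : IsMulCommutative A :=
    ⟨⟨fun x y => e.injective (by rw [map_mul, map_mul, mul_comm])⟩⟩
  have : Group.FG A := Group.fg_of_surjective (f := e.symm.toMonoidHom) e.symm.surjective
  have : Group.FG Q := Group.fg_of_surjective (QuotientGroup.mk'_surjective _)
  open scoped IsMulCommutative in
  have : Finite Q := CommGroup.finite_of_fg_isMulTorsion _ fun x =>
    isOfFinOrder_iff_pow_eq_one.2 ⟨_, pow_pos hp.pos _, pow_eq_one_of_quotient_gammaSeries k x⟩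
  open scoped IsMulCommutative in
  have hθ_pow : ∀ b, θ b ^ p ^ (k + 1 + (k + 1)) = 1 := fun b =>
    MulAut.pow_prime_pow_eq_one_of_stabilizes hp (pow_eq_one_of_quotient_gammaSeries k)
      (fun i => ((gammaChain p A i).subgroupOf A).map (QuotientGroup.mk' _))
      (by simp [gammaChain, Subgroup.map_top_of_surjective _ (QuotientGroup.mk'_surjective _)])
      (QuotientGroup.map_mk'_self _) (θ b) (conj_div_mem_map_gammaChain k hA θ hθ b)
  exact ⟨inferInstance, fun ⟨_, b, rfl⟩ => ⟨_, Subtype.ext (hθ_pow b)⟩⟩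
end

section
/- Let p be a prime, g ≥ 1, and let 1 → Z → E → Σ_g → 1 be a central extension of the orientable surface group Σ_g of genus g by a finite abelian p-group Z (so Z is contained in the centre of E and E/Z ≅ Σ_g). Then E has a normal subgroup V of p-power index containing Z such that the central extension 1 → Z → V → V/Z → 1 splits; that is, V is isomorphic to the direct product Z × (V/Z). -/
open scoped commutatorElement

/-- The single relator `[a₁,b₁]⋯[a_g,b_g]` of the genus-`g` orientable surface group,
as an element of the free group on generators `(i, true) = aᵢ` and `(i, false) = bᵢ`. -/
def surfaceRelator (g : ℕ) : FreeGroup (Fin g × Bool) :=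
  (List.ofFn fun i : Fin g => ⁅FreeGroup.of (i, true), FreeGroup.of (i, false)⁆).prod

/-- The orientable surface group of genus `g`, presented by generators
`a₁,b₁,…,a_g,b_g` and the single relation `[a₁,b₁]⋯[a_g,b_g] = 1`. -/
def SurfaceGroup (g : ℕ) : Type :=
  PresentedGroup ({surfaceRelator g} : Set (FreeGroup (Fin g × Bool)))

instance (g : ℕ) : Group (SurfaceGroup g) :=
  inferInstanceAs (Group (PresentedGroup _))

/-!
Lift the generators of `Σ_{g+1}` to `E`; the product of the commutators of the lifts is some
`z ∈ Z`, with `z ^ q = 1` for `q = p ^ k`. In `Heis z`, sending `a₁ ↦ (1, 0, ·)`,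
`b₁ ↦ (0, 1, ·)` and the remaining generators to `(0, 0, ·)` turns that product into
`z * z⁻¹ = 1`, so the lifts extend to a homomorphism `ψ : Σ_{g+1} → Heis z` whose third
coordinate is a set-theoretic section of `E → E ⧸ Z`. Where the first coordinate is divisible
by `q` the cocycle vanishes, so on this subgroup of `p`-power index the section is a
homomorphism, and its image is a complement to the central subgroup `Z`.
-/

namespace SurfaceGroup

variable {g : ℕ} {G : Type*} [Group G]

def of (x : Fin g × Bool) : SurfaceGroup g := PresentedGroup.of x

lemma lift_surfaceRelator (f : Fin g × Bool → G) :
    FreeGroup.lift f (surfaceRelator g) =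
      (List.ofFn fun i => ⁅f (i, true), f (i, false)⁆).prod := by
  simp [surfaceRelator, map_list_prod, List.map_ofFn, Function.comp_def, map_commutatorElement]

def lift (f : Fin g × Bool → G) (hf : (List.ofFn fun i => ⁅f (i, true), f (i, false)⁆).prod = 1) :
    SurfaceGroup g →* G :=
  PresentedGroup.toGroup (rels := {surfaceRelator g}) fun _ hr => by
    rwa [Set.mem_singleton_iff.mp hr, lift_surfaceRelator]

@[simp]
lemma lift_of (f : Fin g × Bool → G) (hf) (x : Fin g × Bool) : lift f hf (of x) = f x :=
  PresentedGroup.toGroup.of _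

@[ext]
lemma hom_ext {φ ψ : SurfaceGroup g →* G} (h : ∀ x, φ (of x) = ψ (of x)) : φ = ψ :=
  PresentedGroup.ext h

lemma prod_commutator_of :
    (List.ofFn fun i => ⁅of (i, true), of (i, false)⁆).prod = (1 : SurfaceGroup g) := by
  have hmk : FreeGroup.lift (of (g := g)) = PresentedGroup.mk _ :=
    FreeGroup.ext_hom _ _ fun _ => FreeGroup.lift_apply_of
  rw [← lift_surfaceRelator, hmk]
  exact PresentedGroup.one_of_mem (Set.mem_singleton _)

lemma prod_commutator_map_of (f : SurfaceGroup g →* G) :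
    (List.ofFn fun i => ⁅f (of (i, true)), f (of (i, false))⁆).prod = 1 := by
  simp_rw [← map_commutatorElement]
  rw [← Function.comp_def f, ← List.map_ofFn, ← map_list_prod, prod_commutator_of, map_one]

end SurfaceGroup

namespace Subgroup

variable {E : Type*} [Group E]

noncomputable def supMulEquivProdOfCommute {Z H : Subgroup E}
    (hcomm : ∀ x ∈ Z, ∀ y ∈ H, Commute x y) (hdisj : Z ⊓ H = ⊥) : ↥(Z ⊔ H) ≃* Z × H :=
  have hcomm' : ∀ (x : Z) (y : H), Commute (Z.subtype x) (H.subtype y) :=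
    fun x y => hcomm x x.2 y y.2
  have hinj := (MonoidHom.noncommCoprod_injective Z.subtype H.subtype hcomm').mpr <| by
      rw [range_subtype, range_subtype, disjoint_iff]
      exact ⟨Z.subtype_injective, H.subtype_injective, hdisj⟩
  have hrange : (Z.subtype.noncommCoprod H.subtype hcomm').range = Z ⊔ H := by
    rw [MonoidHom.noncommCoprod_range, range_subtype, range_subtype]
  ((MonoidHom.ofInjective hinj).trans (MulEquiv.subgroupCongr hrange)).symm

variable {Z : Subgroup E} [Z.Normal] {K : Subgroup (E ⧸ Z)} (σ : K →* E)
  (hσ : ∀ k, (σ k : E ⧸ Z) = k)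
include hσ

lemma inf_range_eq_bot_of_section : Z ⊓ σ.range = ⊥ := by
  refine eq_bot_iff.mpr ?_
  rintro - ⟨hZ, k, rfl⟩
  have hk : k = 1 := Subtype.ext <| (hσ k).symm.trans ((QuotientGroup.eq_one_iff _).mpr hZ)
  rw [hk, map_one]
  exact one_mem _

lemma sup_range_eq_comap_of_section : Z ⊔ σ.range = K.comap (QuotientGroup.mk' Z) := by
  refine le_antisymm (sup_le (fun x hx => ?_) ?_) fun x hx => ?_
  · simp [(QuotientGroup.eq_one_iff x).mpr hx, one_mem]
  · rintro - ⟨k, rfl⟩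
    simp [hσ k]
  · let k : K := ⟨x, hx⟩
    have hZ : x * (σ k)⁻¹ ∈ Z := by
      rw [← QuotientGroup.eq_one_iff, QuotientGroup.mk_mul, QuotientGroup.mk_inv, hσ k,
        mul_inv_cancel]
    have hH : σ k ∈ σ.range := MonoidHom.mem_range.mpr ⟨k, rfl⟩
    simpa using mul_mem (mem_sup_left hZ) (mem_sup_right hH)

end Subgroup

/-- `ℤ × ℤ × E` with multiplication twisted by the cocycle `((a, b), (a', b')) ↦ z ^ (-(a * b'))`,
so that the commutator of `(1, 0, e)` and `(0, 1, e')` is `(0, 0, ⁅e, e'⁆ * z⁻¹)`. -/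
@[ext]
structure Heis {E : Type*} [Group E] (z : Subgroup.center E) where
  a : ℤ
  b : ℤ
  e : E

namespace Heis

variable {E : Type*} [Group E] {z : Subgroup.center E}

instance : Mul (Heis z) :=
  ⟨fun x y => ⟨x.a + y.a, x.b + y.b, x.e * y.e * (z : E) ^ (-(x.a * y.b))⟩⟩
instance : One (Heis z) := ⟨⟨0, 0, 1⟩⟩
instance : Inv (Heis z) := ⟨fun x => ⟨-x.a, -x.b, x.e⁻¹ * (z : E) ^ (-(x.a * x.b))⟩⟩

@[simp] lemma mul_a (x y : Heis z) : (x * y).a = x.a + y.a := rfl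
@[simp] lemma mul_b (x y : Heis z) : (x * y).b = x.b + y.b := rfl
@[simp] lemma mul_e (x y : Heis z) : (x * y).e = x.e * y.e * (z : E) ^ (-(x.a * y.b)) := rfl
@[simp] lemma one_a : (1 : Heis z).a = 0 := rfl
@[simp] lemma one_b : (1 : Heis z).b = 0 := rfl
@[simp] lemma one_e : (1 : Heis z).e = 1 := rfl
@[simp] lemma inv_a (x : Heis z) : x⁻¹.a = -x.a := rfl
@[simp] lemma inv_b (x : Heis z) : x⁻¹.b = -x.b := rfl
@[simp] lemma inv_e (x : Heis z) : x⁻¹.e = x.e⁻¹ * (z : E) ^ (-(x.a * x.b)) := rfl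

lemma zpow_mul_comm (n : ℤ) (v : E) : (z : E) ^ n * v = v * (z : E) ^ n :=
  (Subgroup.mem_center_iff.mp (Subgroup.zpow_mem _ z.2 n) v).symm

instance : Group (Heis z) :=
  Group.ofLeftAxioms
    (fun x y w => by
      ext
      · simp [add_assoc]
      · simp [add_assoc]
      · simp only [mul_e, mul_a, mul_b, mul_assoc, zpow_mul_comm _ w.e, ← zpow_add]
        ring_nf)
    (fun x => by ext <;> simp)
    (fun x => by
      ext
      · simp
      · simp
      · simp only [mul_e, inv_e, inv_a, mul_assoc, zpow_mul_comm _ x.e, ← zpow_add]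
        simp)

def ofE (z : Subgroup.center E) : E →* Heis z where
  toFun e := ⟨0, 0, e⟩
  map_one' := rfl
  map_mul' x y := by ext <;> simp

def aMod (z : Subgroup.center E) (q : ℕ) : Heis z →* Multiplicative (ZMod q) where
  toFun x := Multiplicative.ofAdd (x.a : ZMod q)
  map_one' := by simp
  map_mul' x y := by simp [ofAdd_add]

lemma mem_ker_aMod {q : ℕ} {x : Heis z} : x ∈ (aMod z q).ker ↔ (q : ℤ) ∣ x.a := by
  simp [aMod, ZMod.intCast_zmod_eq_zero_iff_dvd]

def eMod (Z : Subgroup E) [Z.Normal] (hz : (z : E) ∈ Z) : Heis z →* E ⧸ Z where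
  toFun x := x.e
  map_one' := rfl
  map_mul' x y := by
    simp [(QuotientGroup.eq_one_iff _).mpr (Z.zpow_mem hz _)]

def eOnKer {q : ℕ} (hz : (z : E) ^ q = 1) : (aMod z q).ker →* E where
  toFun x := (x : Heis z).e
  map_one' := rfl
  map_mul' x y := by
    obtain ⟨m, hm⟩ := mem_ker_aMod.mp x.2
    simp [hm, mul_assoc, zpow_mul, hz]

lemma commutator_mk (e e' : E) :
    ⁅(⟨1, 0, e⟩ : Heis z), ⟨0, 1, e'⟩⁆ = ofE z (⁅e, e'⁆ * (z : E)⁻¹) := by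
  ext <;> simp [commutatorElement_def, ofE, mul_assoc]

def liftGen (z : Subgroup.center E) {g : ℕ} (ℓ : Fin (g + 1) × Bool → E)
    (x : Fin (g + 1) × Bool) : Heis z :=
  ⟨if x = (0, true) then 1 else 0, if x = (0, false) then 1 else 0, ℓ x⟩

lemma prod_commutator_liftGen {g : ℕ} (ℓ : Fin (g + 1) × Bool → E)
    (hz : (z : E) = (List.ofFn fun i => ⁅ℓ (i, true), ℓ (i, false)⁆).prod) :
    (List.ofFn fun i => ⁅liftGen z ℓ (i, true), liftGen z ℓ (i, false)⁆).prod = 1 := by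
  have hsucc : ∀ (i : Fin g) (t : Bool), liftGen z ℓ (i.succ, t) = ofE z (ℓ (i.succ, t)) := by
    intro i t
    ext <;> simp [liftGen, ofE, Fin.succ_ne_zero]
  rw [List.ofFn_succ, List.prod_cons] at hz ⊢
  simp only [hsucc, ← map_commutatorElement]
  rw [← Function.comp_def (ofE z), ← List.map_ofFn, ← map_list_prod]
  have h0 : ⁅liftGen z ℓ (0, true), liftGen z ℓ (0, false)⁆ =
      ofE z (⁅ℓ (0, true), ℓ (0, false)⁆ * (z : E)⁻¹) := by
    rw [← commutator_mk]
    rfl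
  rw [h0, ← map_mul, mul_assoc, ← zpow_neg_one, zpow_mul_comm, ← mul_assoc, ← hz, zpow_neg_one,
    mul_inv_cancel, map_one]

theorem exists_lift_surfaceGroup {Z : Subgroup E} [Z.Normal] (hZ : Z ≤ Subgroup.center E)
    {g : ℕ} (f : SurfaceGroup (g + 1) →* E ⧸ Z) :
    ∃ (z : Subgroup.center E) (hz : (z : E) ∈ Z) (ψ : SurfaceGroup (g + 1) →* Heis z),
      (eMod Z hz).comp ψ = f := by
  choose ℓ hℓ using fun x => QuotientGroup.mk_surjective (f (SurfaceGroup.of x))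
  set z := (List.ofFn fun i => ⁅ℓ (i, true), ℓ (i, false)⁆).prod with hz
  have hzZ : z ∈ Z := by
    rw [← QuotientGroup.eq_one_iff, ← SurfaceGroup.prod_commutator_map_of f]
    simp only [← hℓ, hz, ← QuotientGroup.mk'_apply, map_list_prod, List.map_ofFn,
      Function.comp_def, map_commutatorElement]
  refine ⟨⟨z, hZ hzZ⟩, hzZ, SurfaceGroup.lift _ (prod_commutator_liftGen ℓ hz), ?_⟩
  ext x
  simp [eMod, liftGen, hℓ]

theorem exists_complement_of_section {Z : Subgroup E} [Z.Normal] {z : Subgroup.center E}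
    (hz : (z : E) ∈ Z) {q : ℕ} (hzq : (z : E) ^ q = 1) (ψ : E ⧸ Z →* Heis z)
    (hψ : (eMod Z hz).comp ψ = MonoidHom.id _) :
    ∃ H : Subgroup E, Z ⊓ H = ⊥ ∧
      Z ⊔ H = (((aMod z q).comp ψ).comp (QuotientGroup.mk' Z)).ker := by
  let σ := (eOnKer hzq).comp (ψ.subgroupComap (aMod z q).ker)
  have hσ : ∀ k, (σ k : E ⧸ Z) = k := fun k => DFunLike.congr_fun hψ (k : E ⧸ Z)
  refine ⟨σ.range, Subgroup.inf_range_eq_bot_of_section σ hσ, ?_⟩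
  rw [Subgroup.sup_range_eq_comap_of_section σ hσ, ← MonoidHom.comap_ker, ← MonoidHom.comap_ker]

end Heis

theorem MonoidHom.index_ker_dvd_card {G G' : Type*} [Group G] [Group G'] (f : G →* G') :
    f.ker.index ∣ Nat.card G' :=
  Subgroup.index_ker f ▸ f.range.card_subgroup_dvd_card

theorem stmt_9_general (p : ℕ) (hp : p.Prime) (g : ℕ) (hg : 1 ≤ g) (E : Type*) [Group E]
    (Z : Subgroup E) (hZ : Z ≤ Subgroup.center E)
    (hZp : IsPGroup p Z) (hZnormal : Z.Normal) (eq : (E ⧸ Z) ≃* SurfaceGroup g) :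
    ∃ V : Subgroup E, V.Normal ∧ (∃ n : ℕ, V.index = p ^ n) ∧ Z ≤ V ∧
      ∃ H : Subgroup E, H ≤ V ∧ Z ⊓ H = ⊥ ∧ Z ⊔ H = V ∧
        Nonempty (V ≃* Z × H) := by
  obtain ⟨g, rfl⟩ : ∃ g', g = g' + 1 := ⟨g - 1, by omega⟩
  obtain ⟨z, hzZ, ψ, hψ⟩ := Heis.exists_lift_surfaceGroup hZ eq.symm.toMonoidHom
  obtain ⟨k, hk⟩ := hZp ⟨z, hzZ⟩
  have hzq : (z : E) ^ p ^ k = 1 := congrArg Subtype.val hk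
  have hsection : (Heis.eMod Z hzZ).comp (ψ.comp eq.toMonoidHom) = MonoidHom.id _ := by
    ext x
    simpa using DFunLike.congr_fun hψ (eq x)
  obtain ⟨H, hdisj, hsup⟩ := Heis.exists_complement_of_section hzZ hzq _ hsection
  have : NeZero (p ^ k) := ⟨pow_ne_zero _ hp.ne_zero⟩
  have hnormal : (Z ⊔ H).Normal := by
    rw [hsup]
    infer_instance
  have hindex : ∃ n, (Z ⊔ H).index = p ^ n := by
    rw [hsup]
    refine ((Nat.dvd_prime_pow (m := k) hp).mp ?_).imp fun _ => And.right
    exact (MonoidHom.index_ker_dvd_card _).trans (by simp)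
  have hcomm : ∀ x ∈ Z, ∀ y ∈ H, Commute x y :=
    fun x hx y _ => (Subgroup.mem_center_iff.mp (hZ hx) y).symm
  exact ⟨Z ⊔ H, hnormal, hindex, le_sup_left, H, le_sup_right, hdisj, rfl,
    ⟨Subgroup.supMulEquivProdOfCommute hcomm hdisj⟩⟩

/-- Let `p` be a prime, `g ≥ 1`, and let `1 → Z → E → Σ_g → 1` be a central
extension of the surface group `Σ_g` by a finite abelian `p`-group `Z` (so `Z` is central
in `E` and `E/Z ≅ Σ_g`).  Then `E` has a normal subgroup `V` of `p`-power index
containing `Z` for which the central extension `1 → Z → V → V/Z → 1` splits: there is a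
subgroup `H ≤ V` with `Z ⊓ H = 1` and `Z ⊔ H = V`, so that `V` is the internal direct
product `Z × H ≅ Z × (V/Z)`. -/
theorem stmt_9 (p : ℕ) (hp : p.Prime) (g : ℕ) (hg : 1 ≤ g) (E : Type*) [Group E]
    (Z : Subgroup E) (hZ : Z ≤ Subgroup.center E) (hZfin : Finite Z)
    (hZp : IsPGroup p Z) (hZnormal : Z.Normal) (eq : (E ⧸ Z) ≃* SurfaceGroup g) :
    ∃ V : Subgroup E, V.Normal ∧ (∃ n : ℕ, V.index = p ^ n) ∧ Z ≤ V ∧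
      ∃ H : Subgroup E, H ≤ V ∧ Z ⊓ H = ⊥ ∧ Z ⊔ H = V ∧
        Nonempty (V ≃* Z × H) :=
  stmt_9_general p hp g hg E Z hZ hZp hZnormal eq
end

section
/- Let p be a prime, G a group, and 𝓜 a set of normal subgroups of p-power index in G which is directed (for all M₁, M₂ ∈ 𝓜 there exists M ∈ 𝓜 with M ⊆ M₁ ∩ M₂) and which defines the pro-p topology of G (every normal subgroup of p-power index in G contains some member of 𝓜). Then the inverse limit, over M ∈ 𝓜, of the F_p-vector spaces H₁(M;F_p) = M/([M,M]·M^p), with transition maps induced by the inclusions M' ⊆ M, is the zero module. -/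
open scoped commutatorElement

/-- `H₁(H;F_p)`, realised as `H/([H,H]·H^p)`: the quotient of `H` by the (normal) subgroup
generated by all commutators and all `p`-th powers. -/
def H1modP (p : ℕ) (H : Type*) [Group H] : Type _ :=
  H ⧸ Subgroup.normalClosure {x : H | (∃ a b : H, x = ⁅a, b⁆) ∨ ∃ a : H, x = a ^ p}

noncomputable instance (p : ℕ) (H : Type*) [Group H] : Group (H1modP p H) :=
  inferInstanceAs (Group (H ⧸ _))

/-!
If the class of `y_M` in `H₁(M;F_p)` were nonzero, some homomorphism `χ : M → F_p` killing
`[M,M]·M^p` would detect it. The normal core `N` in `G` of `ker χ` has `p`-power index, since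
`M/N` has exponent `p` and `G/M` is a `p`-group. Some `M' ∈ 𝓜` lies in `N`, so `y_{M'} ∈ ker χ`,
contradicting compatibility of `y_{M'}` and `y_M`.
-/

theorem Subgroup.exists_index_eq_pow_of_pow_mem {H : Type*} [Group H] {p : ℕ} [Fact p.Prime]
    (N : Subgroup H) [N.Normal] [N.FiniteIndex] (hpow : ∀ a, a ^ p ∈ N) :
    ∃ k : ℕ, N.index = p ^ k := by
  have : IsPGroup p (H ⧸ N) := fun g => ⟨1, by
    induction g using QuotientGroup.induction_on with
    | H a => rw [pow_one, ← QuotientGroup.mk_pow, QuotientGroup.eq_one_iff]; exact hpow a⟩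
  exact IsPGroup.iff_card.mp this

/-- All `G`-conjugates of `L` contain the `p`-th powers of `M`, so `M` modulo the core has
exponent `p`. -/
theorem Subgroup.exists_index_normalCore_map_subtype_eq_pow {G : Type*} [Group G] {p : ℕ}
    [Fact p.Prime] {M : Subgroup G} [M.Normal] (hM : ∃ n : ℕ, M.index = p ^ n)
    (L : Subgroup M) [L.FiniteIndex] (hpow : ∀ a, a ^ p ∈ L) :
    ∃ n : ℕ, (L.map M.subtype).normalCore.index = p ^ n := by
  set N := (L.map M.subtype).normalCore
  have hNM : N ≤ M := (normalCore_le _).trans (map_subtype_le L)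
  obtain ⟨n, hn⟩ := hM
  have : M.FiniteIndex := ⟨hn ▸ pow_ne_zero n (Fact.out : p.Prime).ne_zero⟩
  have : (L.map M.subtype).FiniteIndex := ⟨by
    rw [index_map_subtype]
    exact mul_ne_zero L.index_ne_zero_of_finite M.index_ne_zero_of_finite⟩
  obtain ⟨k, hk⟩ := (N.subgroupOf M).exists_index_eq_pow_of_pow_mem fun a b => by
    have hconj : b * (a : G) * b⁻¹ ∈ M := ‹M.Normal›.conj_mem _ a.2 b
    have := (mem_map_iff_mem M.subtype_injective).mpr (hpow ⟨_, hconj⟩)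
    simpa [conj_pow] using this
  exact ⟨k + n, by rw [← relIndex_mul_index hNM, relIndex, hk, hn, pow_add]⟩

namespace H1modP

variable (p : ℕ) (H : Type*) [Group H]

noncomputable instance : CommGroup (H1modP p H) where
  mul_comm a b := by
    induction a using QuotientGroup.induction_on with | H a =>
    induction b using QuotientGroup.induction_on with | H b =>
    change (QuotientGroup.mk (a * b) : H ⧸ _) = QuotientGroup.mk (b * a)
    rw [QuotientGroup.eq]
    have : (a * b)⁻¹ * (b * a) = ⁅b⁻¹, a⁻¹⁆ := by group
    exact this ▸ Subgroup.subset_normalClosure (Or.inl ⟨_, _, rfl⟩)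

theorem pow_eq_one (x : H1modP p H) : x ^ p = 1 := by
  induction x using QuotientGroup.induction_on with | H a =>
  exact (QuotientGroup.eq_one_iff (a ^ p)).mpr (Subgroup.subset_normalClosure (Or.inr ⟨a, rfl⟩))

noncomputable instance [NeZero p] : Module (ZMod p) (Additive (H1modP p H)) :=
  AddCommGroup.zmodModule (pow_eq_one p H)

variable {p H}

theorem exists_monoidHom_ne_one [Fact p.Prime] {x : H1modP p H} (hx : x ≠ 1) :
    ∃ χ : H1modP p H →* Multiplicative (ZMod p), χ x ≠ 1 := by
  obtain ⟨f, hf⟩ : ∃ f : Module.Dual (ZMod p) (Additive (H1modP p H)), f (.ofMul x) ≠ 0 := by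
    by_contra! h
    exact hx ((Module.forall_dual_apply_eq_zero_iff (ZMod p) _).mp h)
  exact ⟨AddMonoidHom.toMultiplicativeRight f.toAddMonoidHom, hf⟩

end H1modP

theorem MonoidHom.pow_mem_ker_zmod {H : Type*} [Group H] {p : ℕ} [NeZero p]
    (χ : H →* Multiplicative (ZMod p)) (a : H) : a ^ p ∈ χ.ker := by
  rw [mem_ker, map_pow]
  simpa using pow_card_eq_one' (x := χ a)

theorem stmt_11_general (p : ℕ) (hp : p.Prime) (G : Type*) [Group G] (𝓜 : Set (Subgroup G))
    (hnormal : ∀ M ∈ 𝓜, M.Normal) (hindex : ∀ M ∈ 𝓜, ∃ n : ℕ, M.index = p ^ n)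
    (htop : ∀ N : Subgroup G, N.Normal → (∃ n : ℕ, N.index = p ^ n) → ∃ M ∈ 𝓜, M ≤ N) :
    ∀ y : ∀ M ∈ 𝓜, M,
      (∀ (M₁ : Subgroup G) (h₁ : M₁ ∈ 𝓜) (M₂ : Subgroup G) (h₂ : M₂ ∈ 𝓜)
        (hle : M₁ ≤ M₂),
        (QuotientGroup.mk (Subgroup.inclusion hle (y M₁ h₁)) : H1modP p M₂) =
          QuotientGroup.mk (y M₂ h₂)) →
      ∀ (M : Subgroup G) (hM : M ∈ 𝓜), (QuotientGroup.mk (y M hM) : H1modP p M) = 1 := by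
  intro y hcompat M hM
  have : Fact p.Prime := ⟨hp⟩
  have := hnormal M hM
  by_contra hy
  obtain ⟨χ, hχ⟩ := H1modP.exists_monoidHom_ne_one hy
  set L := (χ.comp (QuotientGroup.mk' _)).ker
  obtain ⟨M', hM', hM'L⟩ := htop (L.map M.subtype).normalCore inferInstance <|
    Subgroup.exists_index_normalCore_map_subtype_eq_pow (hindex M hM) L
      (MonoidHom.pow_mem_ker_zmod _)
  have hM'M : M' ≤ M := hM'L.trans ((Subgroup.normalCore_le _).trans (Subgroup.map_subtype_le L))
  refine hχ (hcompat M' hM' M hM hM'M ▸ ?_)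
  exact (Subgroup.mem_map_iff_mem M.subtype_injective).mp
    (Subgroup.normalCore_le _ (hM'L (y M' hM').2))

/-- Let `p` be a prime, `G` a group, and `𝓜` a directed set of normal
subgroups of `p`-power index in `G` defining the pro-`p` topology of `G`.  Then the
inverse limit over `M ∈ 𝓜` of the groups `H₁(M;F_p) = M/([M,M]·M^p)`, with transition
maps induced by the inclusions, is zero.  (The limit being zero is expressed via
representatives: any family of elements `y_M ∈ M` whose classes are compatible under the
transition maps has all classes trivial.) -/
theorem stmt_11 (p : ℕ) (hp : p.Prime) (G : Type*) [Group G] (𝓜 : Set (Subgroup G))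
    (hnormal : ∀ M ∈ 𝓜, M.Normal) (hindex : ∀ M ∈ 𝓜, ∃ n : ℕ, M.index = p ^ n)
    (hdir : ∀ M₁ ∈ 𝓜, ∀ M₂ ∈ 𝓜, ∃ M ∈ 𝓜, M ≤ M₁ ⊓ M₂)
    (htop : ∀ N : Subgroup G, N.Normal → (∃ n : ℕ, N.index = p ^ n) → ∃ M ∈ 𝓜, M ≤ N) :
    ∀ y : ∀ M ∈ 𝓜, M,
      (∀ (M₁ : Subgroup G) (h₁ : M₁ ∈ 𝓜) (M₂ : Subgroup G) (h₂ : M₂ ∈ 𝓜)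
        (hle : M₁ ≤ M₂),
        (QuotientGroup.mk (Subgroup.inclusion hle (y M₁ h₁)) : H1modP p M₂) =
          QuotientGroup.mk (y M₂ h₂)) →
      ∀ (M : Subgroup G) (hM : M ∈ 𝓜), (QuotientGroup.mk (y M hM) : H1modP p M) = 1 :=
  stmt_11_general p hp G 𝓜 hnormal hindex htop
end

section
/- Let I be a directed index set and let (M_i)_{i∈I} be an inverse system of finite abelian groups over I (so whenever i refines j there is a transition map M_i → M_j, compatibly with composition, and any two indices admit a common refinement). If the inverse limit of the system is zero, then for every index j ∈ I there exists a refinement i of j such that the transition map M_i → M_j is the zero map. -/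
/-!
Since the `M i` are finite, the images of the transition maps into `M j` stabilise to an eventual
image (the Mittag-Leffler condition), and every point of the eventual image lies on a compatible
family. A zero inverse limit therefore forces the eventual image, which is the image of a single
transition map, to vanish.
-/

open CategoryTheory Opposite

namespace CategoryTheory.Functor

variable {J : Type*} [Category* J] [IsCofilteredOrEmpty J] (F : J ⥤ Type*)
  [∀ j, Finite (F.obj j)]

theorem isMittagLeffler_of_finite : F.IsMittagLeffler :=
  F.isMittagLeffler_of_exists_finite_range fun j => ⟨j, 𝟙 j, Set.toFinite _⟩

variable [∀ j, Nonempty (F.obj j)]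

/-- Restricted to its eventual ranges, `F` has surjective transition maps, and a cofiltered system
of nonempty finite types with surjective maps has sections through every point. -/
theorem exists_section_of_mem_eventualRange {j : J} {x : F.obj j}
    (hx : x ∈ F.eventualRange j) : ∃ s ∈ F.sections, s j = x := by
  have := F.toEventualRanges_nonempty F.isMittagLeffler_of_finite
  obtain ⟨s, hs⟩ := F.toEventualRanges.eval_section_surjective_of_surjective
    (F.surjective_toEventualRanges F.isMittagLeffler_of_finite) j ⟨x, hx⟩
  exact ⟨_, (F.toEventualRangesSectionsEquiv s).2, congrArg Subtype.val hs⟩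

theorem exists_range_map_subset_range_eval_sections (j : J) :
    ∃ (i : J) (g : i ⟶ j), Set.range (F.map g) ⊆ Set.range fun s : F.sections => s.1 j := by
  obtain ⟨i, g, hg⟩ := F.isMittagLeffler_iff_eventualRange.1 F.isMittagLeffler_of_finite j
  refine ⟨i, g, fun x hx => ?_⟩
  obtain ⟨s, hs, rfl⟩ := F.exists_section_of_mem_eventualRange (hg ▸ hx)
  exact ⟨⟨s, hs⟩, rfl⟩

end CategoryTheory.Functor

section InverseSystem

variable {I : Type*} [Preorder I] {M : I → Type*} (f : ∀ {i j : I}, j ≤ i → M i → M j)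
  (hid : ∀ i (x : M i), f le_rfl x = x)
  (hcomp : ∀ {i j k : I} (hkj : k ≤ j) (hji : j ≤ i) (x : M i),
    f hkj (f hji x) = f (hkj.trans hji) x)

def inverseSystemFunctor : Iᵒᵖ ⥤ Type _ where
  obj i := M i.unop
  map g := TypeCat.ofHom (f (leOfHom g.unop))
  map_id i := by ext x; exact hid _ x
  map_comp g g' := by ext x; exact (hcomp _ _ x).symm

end InverseSystem

/-- Let `I` be a directed index set and `(M_i)` an inverse system of finite
abelian groups over `I` (with transition maps `M_i →+ M_j` whenever `i` refines `j`,
compatible with composition and identities).  If the inverse limit of the system is zero,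
then for every `j` there is a refinement `i` of `j` such that the transition map
`M_i →+ M_j` is the zero map. -/
theorem stmt_12 (I : Type*) [Preorder I] (hdir : ∀ i j : I, ∃ k, i ≤ k ∧ j ≤ k)
    (M : I → Type*) [∀ i, AddCommGroup (M i)] [∀ i, Finite (M i)]
    (f : ∀ {i j : I}, j ≤ i → (M i →+ M j))
    (hid : ∀ i : I, f (le_refl i) = AddMonoidHom.id (M i))
    (hcomp : ∀ {i j k : I} (hkj : k ≤ j) (hji : j ≤ i) (x : M i),
      f hkj (f hji x) = f (hkj.trans hji) x)
    (hlim : ∀ x : ∀ i, M i, (∀ (i j : I) (h : j ≤ i), f h (x i) = x j) → ∀ i, x i = 0) :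
    ∀ j : I, ∃ (i : I) (h : j ≤ i), ∀ m : M i, f h m = 0 := by
  intro j
  have : IsDirected I (· ≤ ·) := ⟨hdir⟩
  let F := inverseSystemFunctor (fun h => ⇑(f h)) (fun i x => by simp [hid]) hcomp
  have : ∀ i, Nonempty (F.obj i) := fun i => ⟨(0 : M i.unop)⟩
  have : ∀ i, Finite (F.obj i) := fun i => inferInstanceAs (Finite (M i.unop))
  obtain ⟨i, g, hg⟩ := F.exists_range_map_subset_range_eval_sections (op j)
  refine ⟨i.unop, leOfHom g.unop, fun m => ?_⟩
  obtain ⟨s, hsj⟩ := hg ⟨m, rfl⟩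
  exact hsj.symm.trans (hlim (fun i => s.1 (op i)) (fun i j h => s.2 (homOfLE h).op) j)
end

section
/- Let p be an odd prime and let H be a group with an infinite cyclic normal subgroup A such that H/A is a finite p-group. Then A is central in H, the commutator subgroup of H is finite, and H is isomorphic to a semidirect product F ⋊ ℤ, where F is a finite normal p-subgroup of H. -/
/-!
Conjugation gives a homomorphism `H → Aut A ≅ ℤˣ` that kills the abelian group `A`, hence
factors through `H ⧸ A`, whose order is odd; so `A` is central. The centre then has finite
index, and a commutator depends only on the cosets of its entries modulo the centre, so
Schur's theorem applies. The transfer `H → A ≅ ℤ` is `a ↦ a ^ [H : A]` on `A`, so its kernel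
meets the torsion-free `A` trivially and embeds into the `p`-group `H ⧸ A`. Rescaled onto its
image, the transfer becomes a surjection onto `ℤ`, which splits because `ℤ` is free.
-/

open Subgroup
open scoped commutatorElement

theorem MulAut.sq_eq_one_of_isCyclic_of_infinite {G : Type*} [Group G] [IsCyclic G] [Infinite G]
    (σ : MulAut G) : σ ^ 2 = 1 := by
  have e := IsCyclic.mulAutMulEquiv G
  -- `ZMod 0` is `ℤ`, whose units square to one.
  rw [Nat.card_eq_zero_of_infinite] at e
  apply e.injective
  rw [map_pow, map_one]
  exact Int.units_sq _

theorem Subgroup.le_center_of_isCyclic_of_odd_index {G : Type*} [Group G] (A : Subgroup G)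
    [A.Normal] [IsCyclic A] [Infinite A] (hodd : Odd A.index) : A ≤ center G := by
  have hA : ∀ b ∈ A, MulAut.conjNormal (H := A) b = 1 := fun b hb => by
    ext x
    rw [MulAut.conjNormal_apply, MulAut.one_apply, mul_inv_eq_iff_eq_mul]
    exact congrArg Subtype.val (mul_comm' (⟨b, hb⟩ : A) x)
  intro a ha
  refine mem_center_iff.mpr fun g => ?_
  have hg : MulAut.conjNormal (H := A) g = 1 :=
    (pow_eq_one_iff_of_coprime (Nat.coprime_two_left.mpr hodd)).mp
      ⟨MulAut.sq_eq_one_of_isCyclic_of_infinite _,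
        by rw [← map_pow]; exact hA _ (A.pow_index_mem g)⟩
  have := congrArg (fun σ : MulAut A => (σ ⟨a, ha⟩ : G)) hg
  simpa [MulAut.conjNormal_apply, mul_inv_eq_iff_eq_mul] using this

theorem commutatorElement_mul_left_of_mem_center {G : Type*} [Group G] {c : G}
    (hc : c ∈ center G) (u v : G) : ⁅u * c, v⁆ = ⁅u, v⁆ := by
  rw [commutatorElement_def, commutatorElement_def, mul_inv_rev, mul_assoc u c v,
    ← mem_center_iff.mp hc v]
  group

theorem commutatorElement_mul_right_of_mem_center {G : Type*} [Group G] {c : G}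
    (hc : c ∈ center G) (u v : G) : ⁅u, v * c⁆ = ⁅u, v⁆ := by
  rw [commutatorElement_def, commutatorElement_def, mul_inv_rev, ← mul_assoc u v c,
    mul_assoc (u * v) c, ← mem_center_iff.mp hc u⁻¹]
  group

theorem finite_commutatorSet_of_finiteIndex_center (G : Type*) [Group G]
    [(center G).FiniteIndex] : Finite (commutatorSet G) := by
  refine Set.Finite.to_subtype <| (Set.finite_range fun q : (G ⧸ center G) × (G ⧸ center G) =>
    ⁅q.1.out, q.2.out⁆).subset ?_
  rintro - ⟨g, h, rfl⟩
  obtain ⟨c, hc⟩ := QuotientGroup.mk_out_eq_mul (center G) g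
  obtain ⟨d, hd⟩ := QuotientGroup.mk_out_eq_mul (center G) h
  refine ⟨(g, h), ?_⟩
  simp only [hc, hd, commutatorElement_mul_left_of_mem_center c.2,
    commutatorElement_mul_right_of_mem_center d.2]

theorem transfer_apply_of_le_center {G M : Type*} [Group G] [CommGroup M] {A : Subgroup G}
    [A.FiniteIndex] (hA : A ≤ center G) (ϕ : A →* M) (a : A) :
    MonoidHom.transfer ϕ a = ϕ a ^ A.index := by
  rw [MonoidHom.transfer_eq_pow ϕ a fun k g₀ hk => ?_, ← map_pow]
  · rfl
  · calc g₀⁻¹ * (a : G) ^ k * g₀ = g₀ * (g₀⁻¹ * a ^ k * g₀) * g₀⁻¹ := by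
          rw [mem_center_iff.mp (hA hk) g₀, mul_inv_cancel_right]
      _ = a ^ k := by group

theorem MonoidHom.exists_surjective_ker_eq {G : Type*} [Group G]
    (ψ : G →* Multiplicative ℤ) (hψ : ψ ≠ 1) :
    ∃ ψ' : G →* Multiplicative ℤ, Function.Surjective ψ' ∧ ψ'.ker = ψ.ker := by
  obtain ⟨g, hg⟩ := DFunLike.ne_iff.mp hψ
  have : Infinite ψ.range :=
    ((infinite_zpowers.mpr (not_isOfFinOrder_of_isMulTorsionFree hg)).mono
      (zpowers_le.mpr (MonoidHom.mem_range.mpr ⟨g, rfl⟩))).to_subtype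
  refine ⟨intCyclicMulEquiv.symm.toMonoidHom.comp ψ.rangeRestrict,
    intCyclicMulEquiv.symm.surjective.comp ψ.rangeRestrict_surjective, ?_⟩
  rw [← ψ.ker_rangeRestrict]
  ext x
  simp

theorem disjoint_ker_transfer_of_le_center {G M : Type*} [Group G] [CommGroup M]
    [IsMulTorsionFree M] {A : Subgroup G} [A.FiniteIndex] (hA : A ≤ center G) (ϕ : A →* M)
    (hϕ : Function.Injective ϕ) : Disjoint (MonoidHom.transfer ϕ).ker A := by
  refine disjoint_def.mpr fun {x} hx hxA => ?_
  have hpow : ϕ ⟨x, hxA⟩ ^ A.index = 1 := by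
    rw [← transfer_apply_of_le_center hA]
    exact hx
  have h1 : ϕ ⟨x, hxA⟩ = 1 := (pow_eq_one_iff_left FiniteIndex.index_ne_zero).mp hpow
  exact congrArg Subtype.val ((injective_iff_map_eq_one ϕ).mp hϕ _ h1)

theorem exists_surjective_ker_disjoint_of_le_center {G : Type*} [Group G] {A : Subgroup G}
    [A.FiniteIndex] (hA : A ≤ center G) (e : A ≃* Multiplicative ℤ) :
    ∃ ψ : G →* Multiplicative ℤ, Function.Surjective ψ ∧ Disjoint ψ.ker A := by
  have hdisj := disjoint_ker_transfer_of_le_center hA e.toMonoidHom e.injective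
  have hne : MonoidHom.transfer e.toMonoidHom ≠ 1 := by
    rintro h
    rw [h, MonoidHom.ker_one, top_disjoint] at hdisj
    subst hdisj
    exact not_subsingleton _ e.symm.injective.subsingleton
  obtain ⟨ψ, hsurj, hker⟩ := (MonoidHom.transfer e.toMonoidHom).exists_surjective_ker_eq hne
  exact ⟨ψ, hsurj, hker ▸ hdisj⟩

theorem MonoidHom.exists_mulEquiv_semidirectProduct_ker {G : Type*} [Group G]
    (ψ : G →* Multiplicative ℤ) (hψ : Function.Surjective ψ) :
    ∃ φ : Multiplicative ℤ →* MulAut ψ.ker,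
      Nonempty (G ≃* ψ.ker ⋊[φ] Multiplicative ℤ) := by
  obtain ⟨g, hg⟩ := hψ (Multiplicative.ofAdd 1)
  let S : GroupExtension ψ.ker G (Multiplicative ℤ) :=
    { inl := ψ.ker.subtype
      rightHom := ψ
      inl_injective := Subtype.val_injective
      range_inl_eq_ker_rightHom := ψ.ker.range_subtype
      rightHom_surjective := hψ }
  let s : S.Splitting :=
    { toMonoidHom := zpowersHom G g
      rightInverse_rightHom := fun n => by
        simp [S, hg, ← ofAdd_zsmul] }
  exact ⟨s.conjAct, ⟨s.semidirectProductMulEquiv.symm⟩⟩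

theorem Subgroup.injective_mk'_comp_subtype_of_disjoint {G : Type*} [Group G]
    {K A : Subgroup G} [A.Normal] (h : Disjoint K A) :
    Function.Injective ((QuotientGroup.mk' A).comp K.subtype) :=
  (injective_iff_map_eq_one _).mpr fun k hk =>
    Subtype.ext (disjoint_def.mp h k.2 ((QuotientGroup.eq_one_iff _).mp hk))

/-- Let `p` be an odd prime and `H` a group with an infinite cyclic normal
subgroup `A` such that `H/A` is a finite `p`-group.  Then `A` is central in `H`, the
commutator subgroup of `H` is finite, and `H ≅ F ⋊ ℤ` for some finite normal
`p`-subgroup `F` of `H`. -/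
theorem stmt_14 (p : ℕ) (hp : p.Prime) (hodd : p ≠ 2) (H : Type*) [Group H]
    (A : Subgroup H) (hA : A.Normal) (eA : A ≃* Multiplicative ℤ)
    (hfin : Finite (H ⧸ A)) (hq : IsPGroup p (H ⧸ A)) :
    A ≤ Subgroup.center H ∧ Finite (commutator H) ∧
      ∃ F : Subgroup H, F.Normal ∧ Finite F ∧ IsPGroup p F ∧
        ∃ φ : Multiplicative ℤ →* MulAut F,
          Nonempty (H ≃* F ⋊[φ] Multiplicative ℤ) := by
  have : Fact p.Prime := ⟨hp⟩
  have : IsCyclic A := isCyclic_of_surjective eA.symm.toMonoidHom eA.symm.surjective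
  have : Infinite A := Infinite.of_injective eA.symm eA.symm.injective
  have : A.FiniteIndex := finiteIndex_of_finite_quotient
  have hcentral : A ≤ center H := by
    refine A.le_center_of_isCyclic_of_odd_index ?_
    obtain ⟨k, hk⟩ := IsPGroup.iff_card.mp hq
    rw [index, hk]
    exact (hp.odd_of_ne_two hodd).pow
  have : (center H).FiniteIndex := finiteIndex_of_le hcentral
  have : Finite (commutatorSet H) := finite_commutatorSet_of_finiteIndex_center H
  obtain ⟨ψ, hψ, hdisj⟩ := exists_surjective_ker_disjoint_of_le_center hcentral eA
  have hinj := injective_mk'_comp_subtype_of_disjoint hdisj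
  obtain ⟨φ, e⟩ := ψ.exists_mulEquiv_semidirectProduct_ker hψ
  exact ⟨hcentral, inferInstance, ψ.ker, inferInstance, Finite.of_injective _ hinj,
    hq.of_injective _ hinj, φ, e⟩
end
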